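/- Let α ∈ ℝ and let φ be a non-negative locally integrable function satisfying: there are constants C₁,C₂,C₃,C₄>0 with C₁ ≤ φ(s)/s^{2α} ≤ C₂ for all s ≥ 1 and C₃ ≤ φ(s)/s^{2α+1} ≤ C₄ for all 0<s<1. Then there exist constants c,C>0 (depending only on C₁,C₂,C₃,C₄) such that for every non-negative measurable function g on (0,∞) and every x>0, c·F(x) ≤ ∫₀ˣ (H*_{α,φ}g)(y) dy ≤ C·F(x), where F(x) = ∫₀ˣ ln(x/t)·g(t)dt + ∫₀ˣ g(t)dt + x·∫ₓ^∞ (g(t)/t)dt. -/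

import Mathlib

/-!
On `(0, ∞)`, `φ` lies between `modelKernel α C₁ C₃` and `modelKernel α C₂ C₄`, and `H*` is
monotone in `φ`. For `ψ = modelKernel α a b`, Tonelli turns `∫₀ˣ H*g` into
`∫₀^∞ g(t) ∫₀ˣ y^(2α) ψ(t/y) t^(-2α-1) dy dt`, whose inner integrand is `b/y` for `y > t` and
`a/t` for `y ≤ t`, whatever `α` is. Integrating in `y` gives `b log(x/t) + a` for `t < x` and
`a x/t` for `t ≥ x`, so `∫₀ˣ H*g = b ∫₀ˣ log(x/t) g + a (∫₀ˣ g + x ∫ₓ^∞ g/t)` exactly;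
hence `c = min C₁ C₃` and `C = max C₂ C₄`.
-/
open MeasureTheory Set
open scoped ENNReal

/-- The quasi (adjoint) Dunkl–Hausdorff operator acting on `ℝ≥0∞`-valued functions. -/
noncomputable def dhAdjL (α : ℝ) (φ : ℝ → ℝ) (g : ℝ → ℝ≥0∞) (x : ℝ) : ℝ≥0∞ :=
  ENNReal.ofReal (x ^ (2*α)) * ∫⁻ y in Ioi (0:ℝ), ENNReal.ofReal (φ (y/x) / y ^ (2*α+1)) * g y

noncomputable def modelKernel (α a b : ℝ) (s : ℝ) : ℝ :=
  if s < 1 then b * s ^ (2*α+1) else a * s ^ (2*α)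

lemma rpow_mul_modelKernel_div {α a b y t : ℝ} (hy : 0 < y) (ht : 0 < t) :
    y ^ (2*α) * (modelKernel α a b (t/y) / t ^ (2*α+1)) = if t < y then b * y⁻¹ else a * t⁻¹ := by
  have hy' : y ^ (2*α) ≠ 0 := (Real.rpow_pos_of_pos hy _).ne'
  have ht' : t ^ (2*α) ≠ 0 := (Real.rpow_pos_of_pos ht _).ne'
  simp only [modelKernel, div_lt_one hy, Real.div_rpow ht.le hy.le, Real.rpow_add_one ht.ne',
    Real.rpow_add_one hy.ne']
  split_ifs <;> field_simp

lemma dhAdjL_modelKernel (α a b : ℝ) (g : ℝ → ℝ≥0∞) {y : ℝ} (hy : 0 < y) :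
    dhAdjL α (modelKernel α a b) g y =
      ∫⁻ t in Ioi 0, ENNReal.ofReal (if t < y then b * y⁻¹ else a * t⁻¹) * g t := by
  rw [dhAdjL, ← lintegral_const_mul' _ _ ENNReal.ofReal_ne_top]
  refine setLIntegral_congr_fun measurableSet_Ioi fun t ht => ?_
  rw [← mul_assoc, ← ENNReal.ofReal_mul (Real.rpow_nonneg hy.le _),
    rpow_mul_modelKernel_div hy ht]

lemma lintegral_Ioo_inv {t x : ℝ} (ht : 0 < t) (htx : t ≤ x) :
    ∫⁻ y in Ioo t x, ENNReal.ofReal y⁻¹ = ENNReal.ofReal (Real.log (x / t)) := by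
  have hint : IntegrableOn (fun y : ℝ => y⁻¹) (Ioc t x) :=
    (intervalIntegrable_inv_iff.2 (Or.inr (by simp [uIcc_of_le htx, ht.not_ge]))).1
  rw [← ofReal_integral_eq_lintegral_ofReal (hint.mono_set Ioo_subset_Ioc_self)
      ((ae_restrict_iff' measurableSet_Ioo).2
        (ae_of_all _ fun y hy => inv_nonneg.2 (ht.trans hy.1).le)),
    ← integral_Ioc_eq_integral_Ioo, ← intervalIntegral.integral_of_le htx,
    integral_inv_of_pos ht (ht.trans_le htx)]

lemma lintegral_Ioo_ite_inv_of_lt (a b : ℝ) {t x : ℝ} (ht : 0 < t) (htx : t < x) :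
    ∫⁻ y in Ioo 0 x, ENNReal.ofReal (if t < y then b * y⁻¹ else a * t⁻¹) =
      ENNReal.ofReal b * ENNReal.ofReal (Real.log (x / t)) + ENNReal.ofReal a := by
  rw [← Ioc_union_Ioo_eq_Ioo ht.le htx,
    lintegral_union measurableSet_Ioo (Ioc_disjoint_Ioi_same.mono_right Ioo_subset_Ioi_self),
    add_comm]
  congr 1
  · rw [← lintegral_Ioo_inv ht htx.le, ← lintegral_const_mul' _ _ ENNReal.ofReal_ne_top]
    refine setLIntegral_congr_fun measurableSet_Ioo fun y hy => ?_
    rw [if_pos hy.1, ENNReal.ofReal_mul' (inv_nonneg.2 (ht.trans hy.1).le)]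
  · rw [setLIntegral_congr_fun measurableSet_Ioc (fun y hy => by rw [if_neg hy.2.not_gt]),
      setLIntegral_const, Real.volume_Ioc, sub_zero, ← ENNReal.ofReal_mul' ht.le,
      inv_mul_cancel_right₀ ht.ne']

lemma lintegral_Ioo_ite_inv_of_le (a b : ℝ) {t x : ℝ} (ht : 0 < t) (hxt : x ≤ t) :
    ∫⁻ y in Ioo 0 x, ENNReal.ofReal (if t < y then b * y⁻¹ else a * t⁻¹) =
      ENNReal.ofReal a * (ENNReal.ofReal x / ENNReal.ofReal t) := by
  rw [setLIntegral_congr_fun measurableSet_Ioo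
      (fun y hy => by rw [if_neg (hy.2.trans_le hxt).not_gt]),
    setLIntegral_const, Real.volume_Ioo, sub_zero, ENNReal.ofReal_mul' (inv_nonneg.2 ht.le),
    ENNReal.ofReal_inv_of_pos ht, div_eq_mul_inv]
  ring

lemma lintegral_Ioo_dhAdjL_modelKernel (α a b : ℝ) {g : ℝ → ℝ≥0∞} (hg : Measurable g) {x : ℝ}
    (hx : 0 < x) :
    ∫⁻ y in Ioo 0 x, dhAdjL α (modelKernel α a b) g y =
      ENNReal.ofReal b * (∫⁻ t in Ioo 0 x, ENNReal.ofReal (Real.log (x / t)) * g t) +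
        ENNReal.ofReal a * ((∫⁻ t in Ioo 0 x, g t) +
          ENNReal.ofReal x * ∫⁻ t in Ioi x, g t / ENNReal.ofReal t) := by
  set k : ℝ → ℝ → ℝ≥0∞ := fun y t => ENNReal.ofReal (if t < y then b * y⁻¹ else a * t⁻¹)
  have hk : Measurable (Function.uncurry k) :=
    (Measurable.ite (measurableSet_lt measurable_snd measurable_fst) (by fun_prop)
      (by fun_prop)).ennreal_ofReal
  have hk_lt : ∀ t ∈ Ioo 0 x, (∫⁻ y in Ioo 0 x, k y t) * g t =
      ENNReal.ofReal b * (ENNReal.ofReal (Real.log (x / t)) * g t) + ENNReal.ofReal a * g t := by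
    intro t ht
    rw [lintegral_Ioo_ite_inv_of_lt a b ht.1 ht.2]
    ring
  have hk_le : ∀ t ∈ Ici x, (∫⁻ y in Ioo 0 x, k y t) * g t =
      ENNReal.ofReal a * (ENNReal.ofReal x * (g t / ENNReal.ofReal t)) := by
    intro t ht
    rw [lintegral_Ioo_ite_inv_of_le a b (hx.trans_le ht) ht, ENNReal.div_eq_inv_mul,
      ENNReal.div_eq_inv_mul]
    ring
  calc ∫⁻ y in Ioo 0 x, dhAdjL α (modelKernel α a b) g y
      = ∫⁻ y in Ioo 0 x, ∫⁻ t in Ioi 0, k y t * g t :=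
        setLIntegral_congr_fun measurableSet_Ioo fun y hy => dhAdjL_modelKernel α a b g hy.1
    _ = ∫⁻ t in Ioi 0, (∫⁻ y in Ioo 0 x, k y t) * g t := by
        rw [lintegral_lintegral_swap (hk.mul (hg.comp measurable_snd)).aemeasurable]
        exact lintegral_congr fun t => lintegral_mul_const _ hk.of_uncurry_right
    _ = (∫⁻ t in Ioo 0 x, (∫⁻ y in Ioo 0 x, k y t) * g t) +
          ∫⁻ t in Ici x, (∫⁻ y in Ioo 0 x, k y t) * g t := by
        rw [← Ioo_union_Ici_eq_Ioi hx, lintegral_union measurableSet_Ici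
          ((Iio_disjoint_Ici le_rfl).mono_left Ioo_subset_Iio_self)]
    _ = _ := by
        rw [setLIntegral_congr_fun measurableSet_Ioo hk_lt,
          setLIntegral_congr_fun measurableSet_Ici hk_le,
          lintegral_add_left ((by fun_prop : Measurable _).const_mul _),
          lintegral_const_mul' _ _ ENNReal.ofReal_ne_top,
          lintegral_const_mul' _ _ ENNReal.ofReal_ne_top,
          lintegral_const_mul' _ _ ENNReal.ofReal_ne_top,
          lintegral_const_mul' _ _ ENNReal.ofReal_ne_top,
          setLIntegral_congr Ioi_ae_eq_Ici]
        ring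

lemma dhAdjL_mono (α : ℝ) {φ₁ φ₂ : ℝ → ℝ} (hφ : ∀ s, 0 < s → φ₁ s ≤ φ₂ s) (g : ℝ → ℝ≥0∞)
    {y : ℝ} (hy : 0 < y) : dhAdjL α φ₁ g y ≤ dhAdjL α φ₂ g y := by
  refine mul_le_mul_right (setLIntegral_mono' measurableSet_Ioi fun t ht => ?_) _
  gcongr
  exacts [(Real.rpow_pos_of_pos ht _).le, hφ _ (div_pos ht hy)]

lemma setLIntegral_dhAdjL_mono (α : ℝ) {φ₁ φ₂ : ℝ → ℝ} (hφ : ∀ s, 0 < s → φ₁ s ≤ φ₂ s)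
    (g : ℝ → ℝ≥0∞) {s : Set ℝ} (hs : MeasurableSet s) (hs_pos : s ⊆ Ioi 0) :
    ∫⁻ y in s, dhAdjL α φ₁ g y ≤ ∫⁻ y in s, dhAdjL α φ₂ g y :=
  setLIntegral_mono' hs fun _ hy => dhAdjL_mono α hφ g (hs_pos hy)

lemma modelKernel_le {α a b : ℝ} {φ : ℝ → ℝ} (ha : ∀ s, 1 ≤ s → a ≤ φ s / s ^ (2*α))
    (hb : ∀ s, 0 < s → s < 1 → b ≤ φ s / s ^ (2*α+1)) {s : ℝ} (hs : 0 < s) :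
    modelKernel α a b s ≤ φ s := by
  unfold modelKernel
  split_ifs with h
  · exact (le_div_iff₀ (Real.rpow_pos_of_pos hs _)).1 (hb s hs h)
  · exact (le_div_iff₀ (Real.rpow_pos_of_pos hs _)).1 (ha s (not_lt.1 h))

lemma le_modelKernel {α a b : ℝ} {φ : ℝ → ℝ} (ha : ∀ s, 1 ≤ s → φ s / s ^ (2*α) ≤ a)
    (hb : ∀ s, 0 < s → s < 1 → φ s / s ^ (2*α+1) ≤ b) {s : ℝ} (hs : 0 < s) :
    φ s ≤ modelKernel α a b s := by
  unfold modelKernel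
  split_ifs with h
  · exact (div_le_iff₀ (Real.rpow_pos_of_pos hs _)).1 (hb s hs h)
  · exact (div_le_iff₀ (Real.rpow_pos_of_pos hs _)).1 (ha s (not_lt.1 h))

lemma ofReal_min_mul_le (a b : ℝ) (L M N : ℝ≥0∞) :
    ENNReal.ofReal (min a b) * (L + M + N) ≤ ENNReal.ofReal b * L + ENNReal.ofReal a * (M + N) := by
  rw [add_assoc, mul_add]
  gcongr
  exacts [min_le_right a b, min_le_left a b]

lemma le_ofReal_max_mul (a b : ℝ) (L M N : ℝ≥0∞) :
    ENNReal.ofReal b * L + ENNReal.ofReal a * (M + N) ≤ ENNReal.ofReal (max a b) * (L + M + N) := by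
  rw [add_assoc, mul_add (ENNReal.ofReal (max a b))]
  gcongr
  exacts [le_max_right a b, le_max_left a b]

theorem I_dunklHAdj_estimate_general (α C₁ C₂ C₃ C₄ : ℝ)
    (hC₁ : 0 < C₁) (hC₂ : 0 < C₂) (hC₃ : 0 < C₃) :
    ∃ c C : ℝ, 0 < c ∧ 0 < C ∧
      ∀ φ : ℝ → ℝ, (∀ s, 0 ≤ φ s) → LocallyIntegrableOn φ (Ioi 0) →
        (∀ s : ℝ, 1 ≤ s → C₁ ≤ φ s / s ^ (2*α) ∧ φ s / s ^ (2*α) ≤ C₂) →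
        (∀ s : ℝ, 0 < s → s < 1 → C₃ ≤ φ s / s ^ (2*α+1) ∧ φ s / s ^ (2*α+1) ≤ C₄) →
        ∀ g : ℝ → ℝ≥0∞, Measurable g → ∀ x : ℝ, 0 < x →
          ENNReal.ofReal c * ((∫⁻ t in Ioo (0:ℝ) x, ENNReal.ofReal (Real.log (x/t)) * g t) + (∫⁻ t in Ioo (0:ℝ) x, g t) + ENNReal.ofReal x * ∫⁻ t in Ioi x, g t / ENNReal.ofReal t) ≤ (∫⁻ y in Ioo (0:ℝ) x, dhAdjL α φ g y) ∧
          (∫⁻ y in Ioo (0:ℝ) x, dhAdjL α φ g y) ≤ ENNReal.ofReal C * ((∫⁻ t in Ioo (0:ℝ) x, ENNReal.ofReal (Real.log (x/t)) * g t) + (∫⁻ t in Ioo (0:ℝ) x, g t) + ENNReal.ofReal x * ∫⁻ t in Ioi x, g t / ENNReal.ofReal t) := by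
  refine ⟨min C₁ C₃, max C₂ C₄, lt_min hC₁ hC₃, hC₂.trans_le (le_max_left _ _), ?_⟩
  intro φ _ _ hlarge hsmall g hg x hx
  have hlower : ∀ s, 0 < s → modelKernel α C₁ C₃ s ≤ φ s :=
    fun s => modelKernel_le (fun s hs => (hlarge s hs).1) (fun s hs hs1 => (hsmall s hs hs1).1)
  have hupper : ∀ s, 0 < s → φ s ≤ modelKernel α C₂ C₄ s :=
    fun s => le_modelKernel (fun s hs => (hlarge s hs).2) (fun s hs hs1 => (hsmall s hs hs1).2)
  constructor
  · refine (ofReal_min_mul_le _ _ _ _ _).trans ?_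
    rw [← lintegral_Ioo_dhAdjL_modelKernel α _ _ hg hx]
    exact setLIntegral_dhAdjL_mono α hlower g measurableSet_Ioo fun _ hy => hy.1
  · refine le_trans ?_ (le_ofReal_max_mul _ _ _ _ _)
    rw [← lintegral_Ioo_dhAdjL_modelKernel α _ _ hg hx]
    exact setLIntegral_dhAdjL_mono α hupper g measurableSet_Ioo fun _ hy => hy.1

theorem I_dunklHAdj_estimate (α C₁ C₂ C₃ C₄ : ℝ)
    (hC₁ : 0 < C₁) (hC₂ : 0 < C₂) (hC₃ : 0 < C₃) (hC₄ : 0 < C₄) :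
    ∃ c C : ℝ, 0 < c ∧ 0 < C ∧
      ∀ φ : ℝ → ℝ, (∀ s, 0 ≤ φ s) → LocallyIntegrableOn φ (Ioi 0) →
        (∀ s : ℝ, 1 ≤ s → C₁ ≤ φ s / s ^ (2*α) ∧ φ s / s ^ (2*α) ≤ C₂) →
        (∀ s : ℝ, 0 < s → s < 1 → C₃ ≤ φ s / s ^ (2*α+1) ∧ φ s / s ^ (2*α+1) ≤ C₄) →
        ∀ g : ℝ → ℝ≥0∞, Measurable g → ∀ x : ℝ, 0 < x →
          ENNReal.ofReal c * ((∫⁻ t in Ioo (0:ℝ) x, ENNReal.ofReal (Real.log (x/t)) * g t) + (∫⁻ t in Ioo (0:ℝ) x, g t) + ENNReal.ofReal x * ∫⁻ t in Ioi x, g t / ENNReal.ofReal t) ≤ (∫⁻ y in Ioo (0:ℝ) x, dhAdjL α φ g y) ∧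
          (∫⁻ y in Ioo (0:ℝ) x, dhAdjL α φ g y) ≤ ENNReal.ofReal C * ((∫⁻ t in Ioo (0:ℝ) x, ENNReal.ofReal (Real.log (x/t)) * g t) + (∫⁻ t in Ioo (0:ℝ) x, g t) + ENNReal.ofReal x * ∫⁻ t in Ioi x, g t / ENNReal.ofReal t) :=
  I_dunklHAdj_estimate_general α C₁ C₂ C₃ C₄ hC₁ hC₂ hC₃
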